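/- Let $p$ be prime, let $d \ge 1$, let $\xi_1, \ldots, \xi_d \in \mathbb{Z}/p\mathbb{Z}$, let $\alpha_1, \ldots, \alpha_d \in \mathbb{R}/\mathbb{Z}$, let $K \ge 1$, and let $N \le p$ be a positive integer. Consider the uncentred Bohr set $B = \{x \in \mathbb{Z}/p\mathbb{Z} : \|\xi_j x/p - \alpha_j\|_{\mathbb{R}/\mathbb{Z}} < 1/2K \text{ for } j = 1, \ldots, d\}$. Then $B \cap \{1, \ldots, N\}$ can be partitioned into at most $C \cdot 2^d N^{1 - 1/(d+1)}$ arithmetic progressions in $\mathbb{Z}/p\mathbb{Z}$, where $C$ is an absolute constant. -/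

import Mathlib

set_option maxHeartbeats 2000000


open Finset

/-- The distance from a real number to the nearest integer. -/
noncomputable def distToInt (x : ℝ) : ℝ := |x - round x|

/-- `P` is an arithmetic progression in `ℤ/pℤ`. -/
def IsAPmod (p : ℕ) [NeZero p] (P : Finset (ZMod p)) : Prop :=
  ∃ (a r : ZMod p) (L : ℕ), P = (Finset.range L).image (fun i : ℕ => a + (i : ZMod p) * r)

lemma distToInt_le (x : ℝ) (m : ℤ) : distToInt x ≤ |x - m| := round_le x m





lemma distToInt_le_abs (x : ℝ) : distToInt x ≤ |x| := by
  simpa using distToInt_le x 0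

lemma distToInt_add_int (x : ℝ) (k : ℤ) : distToInt (x + k) = distToInt x := by
  unfold distToInt
  rw [round_add_intCast]
  push_cast
  ring_nf

lemma distToInt_sub_int (x : ℝ) (k : ℤ) : distToInt (x - k) = distToInt x := by
  simpa [sub_eq_add_neg] using distToInt_add_int x (-k)

lemma distToInt_neg (x : ℝ) : distToInt (-x) = distToInt x := by
  have h1 : distToInt (-x) ≤ distToInt x := by
    have := distToInt_le (-x) (-(round x))
    simpa [distToInt, abs_sub_comm, neg_add_eq_sub] using this
  have h2 : distToInt x ≤ distToInt (-x) := by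
    have := distToInt_le x (-(round (-x)))
    have h : |x - ((-(round (-x)) : ℤ) : ℝ)| = |(-x) - (round (-x) : ℝ)| := by
      push_cast
      rw [abs_sub_comm]
      ring_nf
    rw [h] at this
    exact this
  linarith

lemma distToInt_eq_of_int_diff {x y : ℝ} (k : ℤ) (h : x = y + k) : distToInt x = distToInt y := by
  rw [h, distToInt_add_int]

lemma run_partition (T : Finset ℕ) (r : ℕ) (hr : 1 ≤ r) :
    ∃ (l : ℕ) (s L : Fin l → ℕ),
      l = (T.filter (fun n => ¬∃ m ∈ T, m + r = n)).card ∧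
      (∀ i, ∀ k < L i, s i + k * r ∈ T) ∧
      (∀ i j, i ≠ j → ∀ k k', k < L i → k' < L j → s i + k * r ≠ s j + k' * r) ∧
      (∀ n ∈ T, ∃ i, ∃ k < L i, n = s i + k * r) := by
  classical
  set St := T.filter (fun n => ¬∃ m ∈ T, m + r = n) with hSt
  have hex : ∀ s : ℕ, ∃ k, s + k * r ∉ T := by
    intro s
    refine ⟨T.sup id + 1, fun hmem => ?_⟩
    have h1 : s + (T.sup id + 1) * r ≤ T.sup id := Finset.le_sup (f := id) hmem
    have h2 : T.sup id + 1 ≤ (T.sup id + 1) * r := Nat.le_mul_of_pos_right _ hr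
    omega
  have hpos : ∀ s : ℕ, s ∈ T → 0 < Nat.find (hex s) := by
    intro s hs
    rcases Nat.eq_zero_or_pos (Nat.find (hex s)) with h0 | h
    · exfalso
      have := Nat.find_spec (hex s)
      rw [h0] at this
      simp at this
      exact this hs
    · exact h
  let e : Fin St.card ≃ St := St.equivFin.symm
  refine ⟨St.card, fun i => (e i : ℕ), fun i => Nat.find (hex (e i : ℕ)), rfl, ?_, ?_, ?_⟩
  · intro i k hk
    have := Nat.find_min (hex (e i : ℕ)) hk
    simpa using this
  · -- disjointness
    have key : ∀ i j : Fin St.card, ((e i : ℕ) < (e j : ℕ)) →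
        ∀ k k', k < Nat.find (hex (e i : ℕ)) → k' < Nat.find (hex (e j : ℕ)) →
        (e i : ℕ) + k * r ≠ (e j : ℕ) + k' * r := by
      intro i j hij k k' hk hk' heq
      set si := (e i : ℕ); set sj := (e j : ℕ)
      have hk'k : k' < k := by
        by_contra h
        push_neg at h
        have : k * r ≤ k' * r := Nat.mul_le_mul_right r h
        omega
      have hmul : (k - k' - 1) * r + r = (k - k') * r := by
        have h1 : k - k' = (k - k' - 1) + 1 := by omega
        conv_rhs => rw [h1]
        rw [Nat.add_mul, one_mul]
      have hmul2 : (k - k') * r + k' * r = k * r := by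
        rw [← Nat.add_mul]
        congr 1
        omega
      have hsj : sj = si + (k - k') * r := by omega
      have hmem : si + (k - k' - 1) * r ∈ T := by
        have hlt : k - k' - 1 < Nat.find (hex si) := by omega
        have := Nat.find_min (hex si) hlt
        simpa using this
      have hpre : (si + (k - k' - 1) * r) + r = sj := by omega
      have hsjSt : sj ∈ St := (e j).2
      rw [hSt, Finset.mem_filter] at hsjSt
      exact hsjSt.2 ⟨si + (k - k' - 1) * r, hmem, hpre⟩
    intro i j hij k k' hk hk' heq
    have hne : (e i : ℕ) ≠ (e j : ℕ) := by
      intro h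
      exact hij (e.injective (Subtype.ext h))
    rcases lt_or_gt_of_ne hne with h | h
    · exact key i j h k k' hk hk' heq
    · exact key j i h k' k hk' hk heq.symm
  · -- coverage
    intro n hn
    induction n using Nat.strong_induction_on with
    | _ n ih =>
      by_cases hs : n ∈ St
      · refine ⟨e.symm ⟨n, hs⟩, 0, ?_, ?_⟩
        · show 0 < Nat.find (hex ((e (e.symm ⟨n, hs⟩)) : ℕ))
          apply hpos
          exact (Finset.mem_filter.mp (e (e.symm ⟨n, hs⟩)).2).1
        · show n = ((e (e.symm ⟨n, hs⟩)) : ℕ) + 0 * r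
          rw [Equiv.apply_symm_apply]
          simp
      · have hnT := hn
        rw [hSt] at hs
        simp only [Finset.mem_filter, not_and, not_not] at hs
        obtain ⟨m, hmT, hmr⟩ := hs hnT
        have hmlt : m < n := by omega
        obtain ⟨i, k, hk, hmk⟩ := ih m hmlt hmT
        beta_reduce at hk hmk
        refine ⟨i, k + 1, ?_, ?_⟩
        · show k + 1 < Nat.find (hex (e i : ℕ))
          have hmul : (k + 1) * r = k * r + r := by rw [Nat.add_mul, one_mul]
          have hne : (e i : ℕ) + (k + 1) * r ∈ T := by
            have hEq : (e i : ℕ) + (k + 1) * r = n := by omega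
            rw [hEq]; exact hnT
          by_contra h
          push_neg at h
          have heq2 : Nat.find (hex (e i : ℕ)) = k + 1 := by omega
          have := Nat.find_spec (hex (e i : ℕ))
          rw [heq2] at this
          exact this hne
        · show n = (e i : ℕ) + (k + 1) * r
          have hmul : (k + 1) * r = k * r + r := by rw [Nat.add_mul, one_mul]
          omega


lemma cross_count (g : ℕ → ℝ) (r N a : ℕ) (hr : 0 < r) (δ ε : ℝ) (hδ : 0 ≤ δ)
    (hstep : ∀ n, r ≤ n → g n = g (n - r) + δ)
    (F : Finset ℕ)
    (hF : ∀ n ∈ F, n ≤ N ∧ r < n ∧ n % r = a ∧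
      distToInt (g n) < ε ∧ ε ≤ distToInt (g (n - r))) :
    (F.card : ℝ) ≤ ((N : ℝ) / r) * δ + 1 := by
  classical
  have hNr : (0:ℝ) ≤ ((N:ℝ)/r) * δ := by positivity
  have hiter : ∀ (k base : ℕ), g (base + k * r) = g base + k * δ := by
    intro k
    induction k with
    | zero => intro base; simp
    | succ k ih =>
      intro base
      have h1 : base + (k+1) * r = (base + k * r) + r := by
        rw [Nat.add_mul, one_mul]; omega
      have h2 : r ≤ (base + k * r) + r := by omega
      rw [h1, hstep _ h2]
      have h3 : base + k * r + r - r = base + k * r := by omega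
      rw [h3, ih]
      push_cast
      ring
  -- decompose each n ∈ F
  have hdec : ∀ n ∈ F, n = a + (n / r) * r ∧ 1 ≤ n / r := by
    intro n hn
    obtain ⟨hN, hrn, hmod, _, _⟩ := hF n hn
    constructor
    · have := Nat.mod_add_div' n r
      omega
    · have : r ≤ n := le_of_lt hrn
      exact Nat.one_le_div_iff hr |>.mpr this
  have hgn : ∀ n ∈ F, g n = g a + (n / r : ℕ) * δ := by
    intro n hn
    conv_lhs => rw [(hdec n hn).1]
    rw [hiter]
  have key : ∀ n ∈ F, (round (g n) : ℝ) - ε < g n ∧ g n - δ ≤ (round (g n) : ℝ) - ε := by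
    intro n hn
    obtain ⟨hN, hrn, hmod, hlt, hge⟩ := hF n hn
    have habs : |g n - (round (g n) : ℝ)| < ε := hlt
    rw [abs_lt] at habs
    constructor
    · linarith [habs.1]
    · by_contra hcon
      push_neg at hcon
      have h1 : |g n - δ - (round (g n) : ℝ)| < ε := by
        rw [abs_lt]; constructor <;> linarith [habs.2]
      have h2 : g (n - r) = g n - δ := by
        have := hstep n (le_of_lt hrn); linarith
      have := distToInt_le (g n - δ) (round (g n))
      rw [← h2] at this h1
      linarith
  -- injectivity of n ↦ round (g n) on F
  have hinj : Set.InjOn (fun n => round (g n)) F := by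
    have mono : ∀ n₁ ∈ F, ∀ n₂ ∈ F, n₁ / r < n₂ / r → round (g n₁) < round (g n₂) := by
      intro n₁ h₁ n₂ h₂ hi
      have k₁ := key n₁ h₁
      have k₂ := key n₂ h₂
      have g₁ := hgn n₁ h₁
      have g₂ := hgn n₂ h₂
      have hcast : ((n₁ / r : ℕ) : ℝ) + 1 ≤ ((n₂ / r : ℕ) : ℝ) := by
        exact_mod_cast Nat.cast_le.mpr (show (n₁ / r) + 1 ≤ n₂ / r from hi)
      have hmul : ((n₁ / r : ℕ) : ℝ) * δ ≤ (((n₂ / r : ℕ) : ℝ) - 1) * δ :=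
        mul_le_mul_of_nonneg_right (by linarith) hδ
      have e1 : (round (g n₁) : ℝ) - ε < g a + (n₁ / r : ℕ) * δ := by rw [← g₁]; exact k₁.1
      have e2 : g a + ((n₂ / r : ℕ) : ℝ) * δ - δ ≤ (round (g n₂) : ℝ) - ε := by
        rw [← g₂]; exact k₂.2
      have hfin : (round (g n₁) : ℝ) < (round (g n₂) : ℝ) := by nlinarith
      exact_mod_cast hfin
    intro n₁ h₁ n₂ h₂ heq
    by_contra hne
    have hdiv : n₁ / r ≠ n₂ / r := by
      intro h
      apply hne
      have d₁ := (hdec n₁ h₁).1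
      have d₂ := (hdec n₂ h₂).1
      have m₁ := (hF n₁ h₁).2.2.1
      have m₂ := (hF n₂ h₂).2.2.1
      rw [h] at d₁
      omega
    rcases lt_or_gt_of_ne hdiv with h | h
    · exact absurd heq (ne_of_lt (mono n₁ h₁ n₂ h₂ h))
    · exact absurd heq.symm (ne_of_lt (mono n₂ h₂ n₁ h₁ h))
  -- image is inside an integer interval
  have himage : F.image (fun n => round (g n)) ⊆
      Finset.Icc ⌈g a + ε⌉ ⌊g a + ε + ((N:ℝ)/r) * δ⌋ := by
    intro z hz
    rw [Finset.mem_image] at hz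
    obtain ⟨n, hn, rfl⟩ := hz
    obtain ⟨hN, hrn, hmod, _, _⟩ := hF n hn
    have k := key n hn
    have gn := hgn n hn
    have hi1 : (1:ℝ) ≤ ((n / r : ℕ) : ℝ) := by exact_mod_cast (hdec n hn).2
    have hi2 : ((n / r : ℕ) : ℝ) ≤ (N:ℝ) / r := by
      rw [le_div_iff₀ (by exact_mod_cast hr : (0:ℝ) < r)]
      have : (n / r) * r ≤ n := Nat.div_mul_le_self n r
      calc ((n / r : ℕ) : ℝ) * r = (((n/r) * r : ℕ) : ℝ) := by push_cast; ring
        _ ≤ (n : ℝ) := by exact_mod_cast this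
        _ ≤ (N : ℝ) := by exact_mod_cast hN
    rw [Finset.mem_Icc]
    constructor
    · rw [Int.ceil_le]
      have : g a + ((n / r : ℕ) : ℝ) * δ - δ ≤ (round (g n) : ℝ) - ε := by rw [← gn]; exact k.2
      nlinarith
    · rw [Int.le_floor]
      have : (round (g n) : ℝ) - ε < g a + ((n / r : ℕ) : ℝ) * δ := by rw [← gn]; exact k.1
      nlinarith
  have hcard : F.card = (F.image (fun n => round (g n))).card :=
    (Finset.card_image_of_injOn hinj).symm
  have hcard2 : (F.image (fun n => round (g n))).card ≤
      (Finset.Icc ⌈g a + ε⌉ ⌊g a + ε + ((N:ℝ)/r) * δ⌋).card :=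
    Finset.card_le_card himage
  have hle : F.card ≤ (Finset.Icc ⌈g a + ε⌉ ⌊g a + ε + ((N:ℝ)/r) * δ⌋).card :=
    hcard ▸ hcard2
  refine le_trans (show (F.card:ℝ) ≤ ((Finset.Icc ⌈g a + ε⌉ ⌊g a + ε + ((N:ℝ)/r) * δ⌋).card : ℝ)
    from Nat.cast_le.mpr hle) ?_

  rw [Int.card_Icc]
  show ((Int.toNat _ : ℕ) : ℝ) ≤ _
  rcases le_or_gt (⌊g a + ε + ((N:ℝ)/r) * δ⌋ + 1 - ⌈g a + ε⌉) 0 with h | h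
  · rw [Int.toNat_of_nonpos h]
    simp
    linarith
  · set z : ℤ := ⌊g a + ε + ((N:ℝ)/r) * δ⌋ + 1 - ⌈g a + ε⌉ with hz
    have hcast : ((z.toNat : ℕ) : ℝ) = ((z : ℤ) : ℝ) := by
      exact_mod_cast congrArg (Int.cast : ℤ → ℝ) (Int.toNat_of_nonneg h.le)
    rw [hcast, hz]
    have h1 : ((⌊g a + ε + ((N:ℝ)/r) * δ⌋ : ℤ) : ℝ) ≤ g a + ε + ((N:ℝ)/r) * δ := Int.floor_le _
    have h2 : (g a + ε : ℝ) ≤ ((⌈g a + ε⌉ : ℤ) : ℝ) := Int.le_ceil _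
    push_cast
    linarith


/-- **Linearisation of Bohr sets.** There is an absolute constant `C` such that the
intersection of the uncentred Bohr set
`B = {x : ‖ξⱼx/p - αⱼ‖ < 1/2K for j = 1,…,d}` with `{1,…,N}` can be partitioned into at
most `C·2^d·N^{1-1/(d+1)}` arithmetic progressions in `ℤ/pℤ`. -/
theorem stmt_17 :
    ∃ C : ℝ, 0 < C ∧
      ∀ (p : ℕ), p.Prime → ∀ (_ : NeZero p) (d : ℕ), 1 ≤ d →
        ∀ (ξ : Fin d → ZMod p) (α : Fin d → ℝ) (K : ℕ), 1 ≤ K →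
          ∀ (N : ℕ), 0 < N → N ≤ p →
            ∃ (l : ℕ), (l : ℝ) ≤ C * 2 ^ d * (N : ℝ) ^ (1 - 1 / ((d : ℝ) + 1)) ∧
              ∃ P : Fin l → Finset (ZMod p),
                (∀ i, IsAPmod p (P i)) ∧
                (∀ i j, i ≠ j → Disjoint (P i) (P j)) ∧
                (∀ x : ZMod p, (∃ i, x ∈ P i) ↔
                  ((∀ j, distToInt (((ξ j * x).val : ℝ) / p - α j) < 1 / (2 * K)) ∧
                    1 ≤ x.val ∧ x.val ≤ N)) := by
  classical
  refine ⟨4, by norm_num, ?_⟩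
  intro p hp hNZ d hd ξ α K hK N hN hNp
  have hp0 : 0 < p := hp.pos
  set ε : ℝ := 1 / (2 * (K : ℝ)) with hε
  set T : Finset ℕ := (Finset.Icc 1 (min N (p - 1))).filter
    (fun n => ∀ j, distToInt (((ξ j * (n : ZMod p)).val : ℝ) / p - α j) < ε) with hTdef
  have hTbounds : ∀ n ∈ T, 1 ≤ n ∧ n ≤ N ∧ n < p := by
    intro n hn
    rw [hTdef, Finset.mem_filter, Finset.mem_Icc] at hn
    omega
  have hcastval : ∀ n < p, ((n : ZMod p)).val = n := fun n h => ZMod.val_natCast_of_lt h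
  have hxx : ∀ x : ZMod p, ((x.val : ℕ) : ZMod p) = x := fun x => ZMod.natCast_rightInverse x
  have hval : ∀ x : ZMod p, x.val ∈ T ↔
      ((∀ j, distToInt (((ξ j * x).val : ℝ) / p - α j) < 1 / (2 * K)) ∧
        1 ≤ x.val ∧ x.val ≤ N) := by
    intro x
    rw [hTdef, Finset.mem_filter, Finset.mem_Icc]
    constructor
    · rintro ⟨⟨h1, h2⟩, hcond⟩
      rw [hxx x] at hcond
      exact ⟨hcond, h1, by omega⟩
    · rintro ⟨hcond, h1, h2⟩
      have hlt : x.val < p := ZMod.val_lt x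
      refine ⟨⟨h1, by omega⟩, ?_⟩
      rw [hxx x]
      exact hcond
  obtain ⟨r, hr1, hcard⟩ : ∃ r : ℕ, 1 ≤ r ∧
      (((T.filter (fun n => ¬∃ m ∈ T, m + r = n)).card : ℝ) ≤
        4 * 2 ^ d * (N : ℝ) ^ (1 - 1 / ((d : ℝ) + 1))) := by
    set x : ℝ := (N : ℝ) ^ ((1:ℝ) / ((d:ℝ) + 1)) with hxdef
    set Npow : ℝ := (N : ℝ) ^ (1 - 1 / ((d:ℝ) + 1)) with hNpowdef
    have hN0 : (0:ℝ) < N := by exact_mod_cast hN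
    have hN1 : (1:ℝ) ≤ N := by exact_mod_cast hN
    have hd1 : (0:ℝ) < (d:ℝ) + 1 := by positivity
    have hppos : (0:ℝ) < p := by exact_mod_cast hp0
    have hxN : x * Npow = N := by
      rw [hxdef, hNpowdef, ← Real.rpow_add hN0]
      norm_num
    have hx1 : 1 ≤ x := Real.one_le_rpow hN1 (by positivity)
    have hNpow0 : 0 < Npow := Real.rpow_pos_of_pos hN0 _
    have h2d : ((d:ℝ) + 1) ≤ 2^d := by
      have : d + 1 ≤ 2^d := Nat.lt_two_pow_self
      exact_mod_cast this
    have hTcard : (T.card : ℝ) ≤ N := by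
      have h1 : T.card ≤ (Finset.Icc 1 (min N (p-1))).card := by
        rw [hTdef]; exact Finset.card_filter_le _ _
      rw [Nat.card_Icc] at h1
      have : T.card ≤ N := by omega
      exact_mod_cast this
    by_cases hsmall : x < 2
    · refine ⟨1, le_refl 1, ?_⟩
      have h1 : ((T.filter (fun n => ¬∃ m ∈ T, m + 1 = n)).card : ℝ) ≤ (T.card : ℝ) :=
        Nat.cast_le.mpr (Finset.card_filter_le _ _)
      have h2 : (N:ℝ) ≤ 2 * Npow := by nlinarith
      have h3 : (2:ℝ) * Npow ≤ 4 * 2^d * Npow := by nlinarith [pow_pos (by norm_num : (0:ℝ) < 2) d]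
      linarith
    · push_neg at hsmall
      set Q : ℕ := ⌊x⌋₊ with hQdef
      have hQ2 : 2 ≤ Q := Nat.le_floor (by exact_mod_cast hsmall)
      have hQ0 : 0 < Q := by omega
      have hQx : (Q:ℝ) ≤ x := Nat.floor_le (by positivity)
      have hxQ1 : x < Q + 1 := Nat.lt_floor_add_one x
      have hQR1 : (1:ℝ) ≤ Q := by exact_mod_cast hQ0
      have hQpos : (0:ℝ) < Q := by linarith
      have hx2Q : x ≤ 2 * Q := by linarith
      have hxd : x ^ (d:ℕ) = Npow := by
        rw [hxdef, ← Real.rpow_natCast ((N:ℝ) ^ ((1:ℝ) / ((d:ℝ) + 1))) d,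
          ← Real.rpow_mul (le_of_lt hN0), hNpowdef]
        congr 1
        field_simp
        ring
      have hxd1 : x ^ (d+1:ℕ) = N := by
        rw [hxdef, ← Real.rpow_natCast ((N:ℝ) ^ ((1:ℝ) / ((d:ℝ) + 1))) (d+1),
          ← Real.rpow_mul (le_of_lt hN0)]
        push_cast
        rw [show (1 / ((d:ℝ)+1)) * ((d:ℝ)+1) = 1 by field_simp]
        exact Real.rpow_one _
      have hQdN : ((Q:ℝ))^(d:ℕ) ≤ Npow := by
        calc ((Q:ℝ))^(d:ℕ) ≤ x^(d:ℕ) := pow_le_pow_left₀ (by positivity) hQx d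
        _ = Npow := hxd
      have hQd1N : Q^(d+1) ≤ N := by
        have : ((Q:ℝ))^(d+1:ℕ) ≤ x^(d+1:ℕ) := pow_le_pow_left₀ (by positivity) hQx (d+1)
        rw [hxd1] at this
        exact_mod_cast this
      have hNQ2 : (N:ℝ)/Q ≤ 2 * Npow := by
        have hx2 : 0 < x / 2 := by linarith
        have h1 : (N:ℝ)/Q ≤ (N:ℝ)/(x/2) :=
          div_le_div_of_nonneg_left (le_of_lt hN0) hx2 (by linarith)
        have h2 : (N:ℝ)/(x/2) = 2 * ((N:ℝ)/x) := by ring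
        have h3 : (N:ℝ)/x = Npow := by
          rw [hxdef, hNpowdef, Real.rpow_sub hN0, Real.rpow_one]
        rw [h2, h3] at h1
        exact h1
      -- pigeonhole
      have hVlt : ∀ (t : ℕ) (j : Fin d), (ξ j * (t : ZMod p)).val < p := fun t j => ZMod.val_lt _
      set box : ℕ → ((Fin d → Fin Q) × Fin Q) := fun t =>
        (fun j => ⟨Q * (ξ j * (t : ZMod p)).val / p, by
            rw [Nat.div_lt_iff_lt_mul hp0]
            exact mul_lt_mul_of_pos_left (hVlt t j) hQ0⟩,
         ⟨min (t / Q^d) (Q-1), lt_of_le_of_lt (Nat.min_le_right _ _) (by omega)⟩) with hboxdef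
      have hcardlt : (Finset.univ : Finset ((Fin d → Fin Q) × Fin Q)).card <
          (Finset.range (Q^(d+1)+1)).card := by
        rw [Finset.card_univ, Finset.card_range, Fintype.card_prod, Fintype.card_fun,
          Fintype.card_fin, Fintype.card_fin, pow_succ]
        omega
      obtain ⟨t1, ht1, t2, ht2, hne, hboxeq⟩ :=
        Finset.exists_ne_map_eq_of_card_lt_of_maps_to hcardlt
          (fun a _ => Finset.mem_univ (box a))
      have main : ∀ t1 t2 : ℕ, t1 < t2 → t2 ≤ Q^(d+1) → box t1 = box t2 →
          ∃ r : ℕ, 1 ≤ r ∧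
          (((T.filter (fun n => ¬∃ m ∈ T, m + r = n)).card : ℝ) ≤
            4 * 2 ^ d * (N : ℝ) ^ (1 - 1 / ((d : ℝ) + 1))) := by
        clear hne hboxeq ht1 ht2 t1 t2
        intro t1 t2 hlt ht2 hboxeq
        obtain ⟨r, hrdef⟩ : ∃ r : ℕ, r = t2 - t1 := ⟨t2 - t1, rfl⟩
        have hrpos : 0 < r := by omega
        have hbox1 : ∀ j, Q * (ξ j * (t1 : ZMod p)).val / p = Q * (ξ j * (t2 : ZMod p)).val / p := by
          intro j
          have := congrFun (congrArg Prod.fst hboxeq) j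
          exact congrArg Fin.val this
        have hbox2 : min (t1 / Q^d) (Q-1) = min (t2 / Q^d) (Q-1) :=
          congrArg Fin.val (congrArg Prod.snd hboxeq)
        have hQdpos : 0 < Q^d := Nat.pow_pos hQ0
        have hrQd : r ≤ Q^d := by
          by_cases hb : t2 / Q^d ≤ Q - 1
          · have ha : t1 / Q^d ≤ Q - 1 := le_trans (Nat.div_le_div_right (le_of_lt hlt)) hb
            rw [min_eq_left ha, min_eq_left hb] at hbox2
            have d2 : Q^d * (t2 / Q^d) + t2 % Q^d = t2 := Nat.div_add_mod t2 (Q^d)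
            have m2 : t2 % Q^d < Q^d := Nat.mod_lt _ hQdpos
            have lo1 : Q^d * (t2 / Q^d) ≤ t1 := by
              rw [← hbox2]
              exact Nat.mul_div_le t1 (Q^d)
            have hi2 : t2 < Q^d * (t2 / Q^d) + Q^d := by
              conv_lhs => rw [← d2]
              exact Nat.add_lt_add_left m2 _
            omega
          · push_neg at hb
            have h2 : min (t2/Q^d) (Q-1) = Q-1 := min_eq_right (le_of_lt hb)
            rw [h2] at hbox2
            have h1 : Q - 1 ≤ t1 / Q^d := by omega
            have h3 : (Q-1) * Q^d ≤ t1 := by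
              rw [← Nat.le_div_iff_mul_le hQdpos]
              exact h1
            have h5 : (Q-1) * Q^d + Q^d = Q * Q^d := by
              have hQ1 : Q - 1 + 1 = Q := by omega
              calc (Q-1) * Q^d + Q^d = (Q - 1 + 1) * Q^d := by rw [Nat.add_mul, one_mul]
              _ = Q * Q^d := by rw [hQ1]
            have h6 : Q^(d+1) = Q * Q^d := by rw [pow_succ, Nat.mul_comm]
            omega
        have hcast2 : ((t2:ℕ) : ZMod p) = ((t1:ℕ) : ZMod p) + ((r:ℕ) : ZMod p) := by
          rw [← Nat.cast_add]
          congr 1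
          omega
        have hdists : ∀ j, distToInt (((ξ j * ((r:ℕ) : ZMod p)).val : ℝ) / p) < 1/Q := by
          intro j
          set va := (ξ j * (t1 : ZMod p)).val with hva
          set vb := (ξ j * (t2 : ZMod p)).val with hvb
          set w := (ξ j * ((r:ℕ) : ZMod p)).val with hw
          have d1 := Nat.div_add_mod (Q * va) p
          have d2 := Nat.div_add_mod (Q * vb) p
          have m1 : Q * va % p < p := Nat.mod_lt _ hp0
          have m2 : Q * vb % p < p := Nat.mod_lt _ hp0
          have hbox1' := hbox1 j
          rw [← hva, ← hvb] at hbox1'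
          rw [hbox1'] at d1
          have hnat1 : Q * vb < Q * va + p := by omega
          have hnat2 : Q * va < Q * vb + p := by omega
          have hreal : |(vb:ℝ)/p - (va:ℝ)/p| < 1/Q := by
            rw [abs_sub_lt_iff]
            constructor
            · rw [div_sub_div_same, div_lt_div_iff₀ hppos hQpos]
              have : (Q:ℝ) * vb < Q * va + p := by exact_mod_cast hnat1
              nlinarith
            · rw [div_sub_div_same, div_lt_div_iff₀ hppos hQpos]
              have : (Q:ℝ) * va < Q * vb + p := by exact_mod_cast hnat2
              nlinarith
          have hz : ((p:ℤ)) ∣ ((vb:ℤ) - va - w) := by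
            rw [← ZMod.intCast_zmod_eq_zero_iff_dvd]
            push_cast
            have e1 : ((vb:ℕ) : ZMod p) = ξ j * ((t2:ℕ) : ZMod p) := by rw [hvb]; exact hxx _
            have e2 : ((va:ℕ) : ZMod p) = ξ j * ((t1:ℕ) : ZMod p) := by rw [hva]; exact hxx _
            have e3 : ((w:ℕ) : ZMod p) = ξ j * ((r:ℕ) : ZMod p) := by rw [hw]; exact hxx _
            rw [e1, e2, e3, hcast2]
            ring
          obtain ⟨k, hk⟩ := hz
          have hkR : ((vb:ℝ)) - va - w = (p:ℝ) * k := by exact_mod_cast hk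
          have hwk : (w:ℝ)/p = ((vb:ℝ)/p - (va:ℝ)/p) + ((-k : ℤ) : ℝ) := by
            push_cast
            field_simp
            linarith
          rw [distToInt_eq_of_int_diff (-k) hwk]
          exact lt_of_le_of_lt (distToInt_le_abs _) hreal
        -- set up the linearized phase functions
        set c : Fin d → ℕ := fun j => (ξ j).val with hcdef
        have L0 : ∀ (j : Fin d) (n : ℕ), (ξ j * (n : ZMod p)).val = (c j * n) % p := by
          intro j n
          have e0 : ξ j * (n : ZMod p) = ((c j * n : ℕ) : ZMod p) := by
            push_cast
            rw [hcdef]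
            rw [hxx (ξ j)]
          rw [e0, ZMod.val_natCast]
        obtain ⟨m0, hm0⟩ : ∃ m0 : Fin d → ℤ, ∀ j,
            m0 j = round (((ξ j * ((r:ℕ):ZMod p)).val : ℝ) / p) := ⟨_, fun _ => rfl⟩
        obtain ⟨dl, hdl⟩ : ∃ dl : Fin d → ℝ, ∀ j,
            dl j = ((ξ j * ((r:ℕ):ZMod p)).val : ℝ) / p - m0 j := ⟨_, fun _ => rfl⟩
        have hdlabs : ∀ j, |dl j| < 1/Q := by
          intro j
          have h := hdists j
          rw [distToInt] at h
          rw [hdl j, hm0 j]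
          exact h
        obtain ⟨M, hM⟩ : ∃ M : Fin d → ℤ, ∀ j,
            M j = ((c j * r / p : ℕ) : ℤ) + m0 j := ⟨_, fun _ => rfl⟩
        obtain ⟨g, hg⟩ : ∃ g : Fin d → ℕ → ℝ, ∀ j n,
            g j n = ((c j * n : ℕ) : ℝ)/p - α j - ((n / r : ℕ) : ℝ) * (M j : ℝ) := ⟨_, fun _ _ => rfl⟩
        have L1 : ∀ (j : Fin d) (n : ℕ),
            distToInt (((ξ j * (n : ZMod p)).val : ℝ)/p - α j) = distToInt (g j n) := by
          intro j n
          rw [L0 j n]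
          have hdm := Nat.div_add_mod (c j * n) p
          have hdmR : (p:ℝ) * ((c j * n / p : ℕ):ℝ) + (((c j * n) % p : ℕ):ℝ)
              = ((c j * n : ℕ):ℝ) := by exact_mod_cast hdm
          have expand : ((((n / r : ℕ) : ℤ) * M j - ((c j * n / p : ℕ) : ℤ) : ℤ) : ℝ)
              = ((n / r : ℕ) : ℝ) * ((M j : ℤ) : ℝ) - ((c j * n / p : ℕ) : ℝ) := by
            simp only [Int.cast_sub, Int.cast_mul, Int.cast_natCast]
          have hCB : (((c j * n) % p : ℕ) : ℝ)/p = ((c j * n : ℕ) : ℝ)/p - ((c j * n / p : ℕ) : ℝ) := by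
            have hdmR' := hdmR
            push_cast at hdmR'
            field_simp
            linarith
          have key : (((c j * n) % p : ℕ) : ℝ)/p - α j
              = g j n + ((((n / r : ℕ) : ℤ) * M j - ((c j * n / p : ℕ) : ℤ) : ℤ) : ℝ) := by
            rw [hg j n, expand, hCB]
            ring
          rw [key]
          exact distToInt_add_int _ _
        have L2 : ∀ (j : Fin d) (n : ℕ), r ≤ n → g j n = g j (n - r) + dl j := by
          intro j n hrn
          have hdiv : n / r = (n - r)/r + 1 := by
            conv_lhs => rw [← Nat.sub_add_cancel hrn]
            rw [Nat.add_div_right _ hrpos]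
          have hcr : ((c j * r : ℕ) : ℝ)/p = dl j + (M j : ℝ) := by
            have hv : (ξ j * ((r:ℕ):ZMod p)).val = (c j * r) % p := L0 j r
            have hdm := Nat.div_add_mod (c j * r) p
            have hdmR : (p:ℝ) * ((c j * r / p : ℕ):ℝ) + (((c j * r) % p : ℕ):ℝ)
                = ((c j * r : ℕ):ℝ) := by exact_mod_cast hdm
            have hMR : ((M j : ℤ) : ℝ) = ((c j * r / p : ℕ) : ℝ) + ((m0 j : ℤ) : ℝ) := by
              rw [hM j]
              simp only [Int.cast_add, Int.cast_natCast]
            rw [hdl j, hv, hMR]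
            have hdmR' := hdmR
            push_cast at hdmR'
            field_simp
            linarith
          have hcn : ((c j * n : ℕ) : ℝ) = ((c j * (n - r) : ℕ):ℝ) + ((c j * r : ℕ):ℝ) := by
            have : c j * n = c j * (n - r) + c j * r := by
              rw [← Nat.mul_add]
              congr 1
              omega
            exact_mod_cast congrArg (Nat.cast : ℕ → ℝ) this
          have hAA : ((c j * n : ℕ):ℝ)/p = ((c j * (n - r) : ℕ):ℝ)/p + (dl j + (M j : ℝ)) := by
            rw [← hcr, hcn]
            ring
          rw [hg j n, hg j (n - r), hdiv, Nat.cast_add, Nat.cast_one]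
          linarith [hAA]
        -- the transition sets
        obtain ⟨E, hE⟩ : ∃ E : Fin d → Finset ℕ, ∀ j, E j = (Finset.Icc 1 N).filter
            (fun n => r < n ∧ distToInt (g j n) < ε ∧ ε ≤ distToInt (g j (n - r))) :=
          ⟨_, fun _ => rfl⟩
        have hEcard : ∀ j, ((E j).card : ℝ) ≤ (N:ℝ)/Q + r := by
          intro j
          have hfib := Finset.card_eq_sum_card_fiberwise
            (f := fun n => n % r) (s := E j) (t := Finset.range r)
            (fun n _ => Finset.mem_range.mpr (Nat.mod_lt _ hrpos))
          have hrR : (0:ℝ) < r := by exact_mod_cast hrpos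
          have hNr0 : (0:ℝ) ≤ (N:ℝ)/r := by positivity
          have hper : ∀ a ∈ Finset.range r,
              (((E j).filter (fun n => n % r = a)).card : ℝ) ≤ ((N:ℝ)/r) * (1/Q) + 1 := by
            intro a _
            have habs := hdlabs j
            have hmemE : ∀ n ∈ (E j).filter (fun n => n % r = a),
                n ≤ N ∧ r < n ∧ n % r = a ∧ distToInt (g j n) < ε ∧ ε ≤ distToInt (g j (n - r)) := by
              intro n hn
              rw [Finset.mem_filter, hE j, Finset.mem_filter, Finset.mem_Icc] at hn
              exact ⟨hn.1.1.2, hn.1.2.1, hn.2, hn.1.2.2.1, hn.1.2.2.2⟩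
            rcases le_or_gt 0 (dl j) with hsgn | hsgn
            · have hcc := cross_count (g j) r N a hrpos (dl j) ε hsgn
                (fun n hn => L2 j n hn) ((E j).filter (fun n => n % r = a)) hmemE
              refine le_trans hcc ?_
              have : (N:ℝ)/r * dl j ≤ (N:ℝ)/r * (1/Q) := by
                apply mul_le_mul_of_nonneg_left _ hNr0
                calc dl j ≤ |dl j| := le_abs_self _
                _ ≤ 1/Q := le_of_lt habs
              linarith
            · have hstep' : ∀ n, r ≤ n → (fun n => -(g j n)) n = (fun n => -(g j n)) (n - r) + (-(dl j)) := by
                intro n hn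
                simp only []
                rw [L2 j n hn]
                ring
              have hmemE' : ∀ n ∈ (E j).filter (fun n => n % r = a),
                  n ≤ N ∧ r < n ∧ n % r = a ∧ distToInt (-(g j n)) < ε ∧
                    ε ≤ distToInt (-(g j (n - r))) := by
                intro n hn
                have := hmemE n hn
                rw [distToInt_neg, distToInt_neg]
                exact this
              have hcc := cross_count (fun n => -(g j n)) r N a hrpos (-(dl j)) ε
                (by linarith) hstep' ((E j).filter (fun n => n % r = a)) hmemE'
              refine le_trans hcc ?_
              have : (N:ℝ)/r * (-(dl j)) ≤ (N:ℝ)/r * (1/Q) := by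
                apply mul_le_mul_of_nonneg_left _ hNr0
                calc -(dl j) ≤ |dl j| := neg_le_abs _
                _ ≤ 1/Q := le_of_lt habs
              linarith
          have hsum : ((E j).card : ℝ) ≤ (r:ℝ) * (((N:ℝ)/r) * (1/Q) + 1) := by
            rw [hfib]
            push_cast
            calc (∑ a ∈ Finset.range r, (((E j).filter (fun n => n % r = a)).card : ℝ))
                ≤ ∑ a ∈ Finset.range r, (((N:ℝ)/r) * (1/Q) + 1) := Finset.sum_le_sum hper
            _ = (r:ℝ) * (((N:ℝ)/r) * (1/Q) + 1) := by
                rw [Finset.sum_const, Finset.card_range]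
                simp only [nsmul_eq_mul]
          have hrne : (r:ℝ) ≠ 0 := ne_of_gt hrR
          have heq : (r:ℝ) * (((N:ℝ)/r) * (1/Q) + 1) = (N:ℝ)/Q + r := by
            field_simp
          rw [heq] at hsum
          exact hsum
        -- starts are contained in Icc 1 r ∪ transitions
        refine ⟨r, hrpos, ?_⟩
        have hsubset : T.filter (fun n => ¬∃ m ∈ T, m + r = n) ⊆
            (Finset.Icc 1 r) ∪ Finset.univ.biUnion E := by
          intro n hn
          rw [Finset.mem_filter] at hn
          obtain ⟨hnT, hnp⟩ := hn
          have hnb := hTbounds n hnT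
          by_cases hnr : n ≤ r
          · exact Finset.mem_union_left _ (Finset.mem_Icc.mpr ⟨hnb.1, hnr⟩)
          · push_neg at hnr
            have hmnotT : (n - r) ∉ T := by
              intro hmem
              exact hnp ⟨n - r, hmem, by omega⟩
            have hmIcc : (n - r) ∈ Finset.Icc 1 (min N (p-1)) := by
              rw [Finset.mem_Icc]
              have : n ∈ Finset.Icc 1 (min N (p-1)) := by
                rw [hTdef, Finset.mem_filter] at hnT
                exact hnT.1
              rw [Finset.mem_Icc] at this
              omega
            have hcondn : ∀ j, distToInt (((ξ j * (n : ZMod p)).val : ℝ) / p - α j) < ε := by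
              rw [hTdef, Finset.mem_filter] at hnT
              exact hnT.2
            have : ¬ (∀ j, distToInt (((ξ j * ((n - r : ℕ) : ZMod p)).val : ℝ) / p - α j) < ε) := by
              intro hall
              apply hmnotT
              rw [hTdef, Finset.mem_filter]
              exact ⟨hmIcc, hall⟩
            push_neg at this
            obtain ⟨j, hj⟩ := this
            apply Finset.mem_union_right
            rw [Finset.mem_biUnion]
            refine ⟨j, Finset.mem_univ j, ?_⟩
            rw [hE j, Finset.mem_filter, Finset.mem_Icc]
            refine ⟨⟨hnb.1, hnb.2.1⟩, hnr, ?_, ?_⟩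
            · rw [← L1]
              exact hcondn j
            · rw [← L1]
              exact hj
        have hcard1 : (T.filter (fun n => ¬∃ m ∈ T, m + r = n)).card ≤
            r + ∑ j : Fin d, (E j).card := by
          calc (T.filter (fun n => ¬∃ m ∈ T, m + r = n)).card
              ≤ ((Finset.Icc 1 r) ∪ Finset.univ.biUnion E).card := Finset.card_le_card hsubset
          _ ≤ (Finset.Icc 1 r).card + (Finset.univ.biUnion E).card := Finset.card_union_le _ _
          _ ≤ r + ∑ j : Fin d, (E j).card := by
              have h1 : (Finset.Icc 1 r).card = r := by rw [Nat.card_Icc]; omega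
              have h2 : (Finset.univ.biUnion E).card ≤ ∑ j : Fin d, (E j).card :=
                Finset.card_biUnion_le
              omega
        have hcardR : ((T.filter (fun n => ¬∃ m ∈ T, m + r = n)).card : ℝ) ≤
            (r:ℝ) + (d:ℝ) * ((N:ℝ)/Q + r) := by
          have h1 : ((T.filter (fun n => ¬∃ m ∈ T, m + r = n)).card : ℝ) ≤
              (r:ℝ) + ∑ j : Fin d, ((E j).card : ℝ) := by
            have := hcard1
            push_cast
            exact_mod_cast this
          refine le_trans h1 ?_
          have h2 : ∑ j : Fin d, ((E j).card : ℝ) ≤ ∑ _j : Fin d, ((N:ℝ)/Q + r) :=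
            Finset.sum_le_sum (fun j _ => hEcard j)
          have h3 : ∑ _j : Fin d, ((N:ℝ)/Q + r) = (d:ℝ) * ((N:ℝ)/Q + r) := by
            rw [Finset.sum_const, Finset.card_univ, Fintype.card_fin]
            simp only [nsmul_eq_mul]
          linarith
        -- final numeric bound
        have hrNpow : (r:ℝ) ≤ Npow := by
          have h1 : (r:ℝ) ≤ ((Q^d : ℕ) : ℝ) := by exact_mod_cast hrQd
          rw [Nat.cast_pow] at h1
          linarith [hQdN]
        have hfinal : (r:ℝ) + (d:ℝ) * ((N:ℝ)/Q + r) ≤ 4 * 2^d * Npow := by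
          have hdR : (0:ℝ) ≤ d := Nat.cast_nonneg d
          have h1 : (r:ℝ) + (d:ℝ) * ((N:ℝ)/Q + r) ≤ Npow + (d:ℝ) * (2*Npow + Npow) := by
            have := mul_le_mul_of_nonneg_left
              (show (N:ℝ)/Q + r ≤ 2*Npow + Npow by linarith [hNQ2, hrNpow]) hdR
            linarith [hrNpow]
          have h2 : Npow + (d:ℝ) * (2*Npow + Npow) = (3*(d:ℝ)+1) * Npow := by ring
          have h3 : (3*(d:ℝ)+1) ≤ 4 * 2^d := by nlinarith [h2d, hdR]
          have h4 : (3*(d:ℝ)+1) * Npow ≤ 4 * 2^d * Npow :=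
            mul_le_mul_of_nonneg_right h3 (le_of_lt hNpow0)
          linarith
        calc ((T.filter (fun n => ¬∃ m ∈ T, m + r = n)).card : ℝ)
            ≤ (r:ℝ) + (d:ℝ) * ((N:ℝ)/Q + r) := hcardR
        _ ≤ 4 * 2^d * Npow := hfinal
      rcases lt_or_gt_of_ne hne with h | h
      · exact main t1 t2 h (by rw [Finset.mem_range] at ht2; omega) hboxeq
      · exact main t2 t1 h (by rw [Finset.mem_range] at ht1; omega) hboxeq.symm
  obtain ⟨l, s, L, hl, hmem, hdisj, hcover⟩ := run_partition T r hr1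
  refine ⟨l, by rw [hl]; exact hcard, ?_⟩
  refine ⟨fun i => (Finset.range (L i)).image (fun k => ((s i + k * r : ℕ) : ZMod p)), ?_, ?_, ?_⟩
  · intro i
    refine ⟨(s i : ZMod p), (r : ZMod p), L i, ?_⟩
    apply Finset.image_congr
    intro k _
    push_cast
    ring
  · intro i j hij
    rw [Finset.disjoint_left]
    intro x hxi hxj
    rw [Finset.mem_image] at hxi hxj
    obtain ⟨k, hk, rfl⟩ := hxi
    obtain ⟨k', hk', heq⟩ := hxj
    rw [Finset.mem_range] at hk hk'
    have h1 : s i + k * r ∈ T := hmem i k hk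
    have h2 : s j + k' * r ∈ T := hmem j k' hk'
    have e1 : s i + k * r = s j + k' * r := by
      have := congrArg ZMod.val heq
      rw [hcastval _ (hTbounds _ h2).2.2, hcastval _ (hTbounds _ h1).2.2] at this
      omega
    exact hdisj i j hij k k' hk hk' e1
  · intro x
    constructor
    · rintro ⟨i, hxi⟩
      rw [Finset.mem_image] at hxi
      obtain ⟨k, hk, rfl⟩ := hxi
      rw [Finset.mem_range] at hk
      have h1 : s i + k * r ∈ T := hmem i k hk
      have h2 : ((s i + k * r : ℕ) : ZMod p).val = s i + k * r := hcastval _ (hTbounds _ h1).2.2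
      rw [← hval]
      rw [h2]
      exact h1
    · intro hc
      rw [← hval] at hc
      obtain ⟨i, k, hk, hik⟩ := hcover _ hc
      refine ⟨i, ?_⟩
      rw [Finset.mem_image]
      exact ⟨k, Finset.mem_range.mpr hk, by rw [← hik, hxx]⟩
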